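/- arXiv:2501.07714 — 2 statements merged into one kernel-verified Lean document; each statement's English description precedes it below -/
import Mathlib

section
/- Let ε > 0, let Q : ℝ → ℝ be the mid-rise uniform quantizer Q(v) = ε·⌊v/ε⌋ + ε/2, let x be a real-valued random variable, and let w be a random variable uniformly distributed on [−ε/2, ε/2] and independent of x. Then the dither-quantization error e := Q(x + w) − x − w is uniformly distributed on [−ε/2, ε/2] and is independent of x. -/
open MeasureTheory ProbabilityTheory

/-- The uniform probability measure on the interval `[-ε/2, ε/2]`. -/
noncomputable def unifDither (ε : ℝ) : Measure ℝ :=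
  (ENNReal.ofReal ε)⁻¹ • volume.restrict (Set.Icc (-(ε/2)) (ε/2))

/-- The mid-rise uniform quantizer of resolution `ε`: `Q(v) = ε⌊v/ε⌋ + ε/2`. -/
noncomputable def midRiseQuantizer (ε : ℝ) (v : ℝ) : ℝ :=
  ε * (⌊v / ε⌋ : ℝ) + ε / 2

/-!
The error `Q v - v` of the quantizer is an `ε`-periodic sawtooth of slope `-1`, so it factors through
the circle `ℝ/εℤ`. A uniform dither pushed to that circle is Haar measure, which is invariant under
the rotation by `x`; hence, conditionally on `x = a`, the error `Q(a + w) - (a + w)` has the same law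
as `Q w - w`, and on one period the sawtooth is a reflection, which maps the uniform law to itself.
A conditional law not depending on `a` means the error is independent of `x` with that law.
-/

open Set

namespace ProbabilityTheory

variable {Ω α β : Type*} [MeasurableSpace Ω] [MeasurableSpace α] [MeasurableSpace β]
  {P : Measure Ω} {X : Ω → α} {W : Ω → β} {f : α → β → β}

theorem IndepFun.map_prodMk_skew_eq_prod [IsFiniteMeasure P] (hX : Measurable X)
    (hW : Measurable W) (hXW : IndepFun X W P) (hf : Measurable (Function.uncurry f))
    (hfW : ∀ a, (P.map W).map (f a) = P.map W) :
    P.map (fun ω => (X ω, f (X ω) (W ω))) = (P.map X).prod (P.map W) := by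
  have hjoint : P.map (fun ω => (X ω, W ω)) = (P.map X).prod (P.map W) :=
    (indepFun_iff_map_prod_eq_prod_map_map hX.aemeasurable hW.aemeasurable).1 hXW
  have hskew := (MeasurePreserving.id (P.map X)).skew_product hf (.of_forall hfW)
  rw [← hskew.map_eq, ← hjoint, Measure.map_map hskew.measurable (hX.prodMk hW)]
  rfl

theorem IndepFun.skew_indepFun_and_map_eq [IsProbabilityMeasure P] (hX : Measurable X)
    (hW : Measurable W) (hXW : IndepFun X W P) (hf : Measurable (Function.uncurry f))
    (hfW : ∀ a, (P.map W).map (f a) = P.map W) :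
    IndepFun (fun ω => f (X ω) (W ω)) X P ∧ P.map (fun ω => f (X ω) (W ω)) = P.map W := by
  have hjoint := hXW.map_prodMk_skew_eq_prod hX hW hf hfW
  have hE : Measurable fun ω => f (X ω) (W ω) := hf.comp (hX.prodMk hW)
  have hlaw : P.map (fun ω => f (X ω) (W ω)) = P.map W := by
    have := Measure.isProbabilityMeasure_map (μ := P) hX.aemeasurable
    rw [show (fun ω => f (X ω) (W ω)) = Prod.snd ∘ fun ω => (X ω, f (X ω) (W ω)) from rfl,
      ← Measure.map_map measurable_snd (hX.prodMk hE), hjoint, Measure.map_snd_prod,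
      measure_univ, one_smul]
  refine ⟨IndepFun.symm ?_, hlaw⟩
  rw [indepFun_iff_map_prod_eq_prod_map_map hX.aemeasurable hE.aemeasurable, hjoint, hlaw]

end ProbabilityTheory

theorem Function.Periodic.map_add_volume_restrict_Ioc {β : Type*} [MeasurableSpace β] {T : ℝ}
    [Fact (0 < T)] {f : ℝ → β} (hf : Function.Periodic f T) (hfm : Measurable f) (t a : ℝ) :
    (volume.restrict (Ioc a (a + T))).map (fun s => f (t + s)) =
      (volume : Measure (AddCircle T)).map hf.lift := by
  have hlift : Measurable hf.lift := QuotientAddGroup.measurable_from_quotient.2 hfm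
  have hrot := (measurePreserving_add_left (volume : Measure (AddCircle T)) t).comp
    (AddCircle.measurePreserving_mk T a)
  rw [← hrot.map_eq, Measure.map_map hlift hrot.measurable]
  rfl

noncomputable def quantError (ε v : ℝ) : ℝ := midRiseQuantizer ε v - v

theorem measurable_quantError (ε : ℝ) : Measurable (quantError ε) := by
  unfold quantError midRiseQuantizer
  fun_prop

theorem quantError_periodic {ε : ℝ} (hε : 0 < ε) : Function.Periodic (quantError ε) ε := by
  intro v
  simp only [quantError, midRiseQuantizer, add_div, div_self hε.ne', Int.floor_add_one]
  push_cast
  ring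

theorem quantError_of_mem_Ico {ε v : ℝ} (hε : 0 < ε) (hv : v ∈ Ico 0 ε) :
    quantError ε v = ε / 2 - v := by
  have hfloor : ⌊v / ε⌋ = 0 :=
    Int.floor_eq_zero_iff.2 ⟨div_nonneg hv.1 hε.le, (div_lt_one hε).2 hv.2⟩
  rw [quantError, midRiseQuantizer, hfloor]
  push_cast
  ring

theorem map_quantError_volume_restrict_Ioc {ε : ℝ} (hε : 0 < ε) :
    (volume.restrict (Ioc 0 ε)).map (quantError ε) = volume.restrict (Ioc (-(ε / 2)) (ε / 2)) := by
  have hreflect := (Measure.measurePreserving_sub_left volume (ε / 2)).restrict_preimage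
    (measurableSet_Ioc (a := -(ε / 2)) (b := ε / 2))
  rw [preimage_const_sub_Ioc, sub_self, sub_neg_eq_add, add_halves] at hreflect
  rw [Measure.restrict_congr_set Ico_ae_eq_Ioc.symm, ← hreflect.map_eq]
  refine Measure.map_congr ((ae_restrict_iff' measurableSet_Ico).2 (.of_forall ?_))
  exact fun v hv => quantError_of_mem_Ico hε hv

theorem map_quantError_add_unifDither {ε : ℝ} (hε : 0 < ε) (t : ℝ) :
    (unifDither ε).map (fun s => quantError ε (t + s)) = unifDither ε := by
  have : Fact (0 < ε) := ⟨hε⟩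
  have hper := quantError_periodic hε
  have hrot : (volume.restrict (Ioc (-(ε / 2)) (ε / 2))).map (fun s => quantError ε (t + s)) =
      (volume.restrict (Ioc 0 ε)).map (quantError ε) := by
    have h := hper.map_add_volume_restrict_Ioc (measurable_quantError ε)
    have ht := h t (-(ε / 2))
    have h0 := h 0 0
    rw [show -(ε / 2) + ε = ε / 2 by ring] at ht
    simp only [zero_add] at h0
    rw [ht, h0]
  rw [unifDither, Measure.restrict_congr_set Ioc_ae_eq_Icc.symm, Measure.map_smul, hrot,
    map_quantError_volume_restrict_Ioc hε]

/-- the dither-quantization error `e = Q(x + w) − x − w` is uniformly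
distributed on `[−ε/2, ε/2]` and independent of `x`. -/
theorem dither_error_uniform_and_indep
    {Ω : Type*} [MeasureSpace Ω] [IsProbabilityMeasure (ℙ : Measure Ω)]
    (ε : ℝ) (hε : 0 < ε)
    (x w : Ω → ℝ) (hx : Measurable x) (hw : Measurable w)
    (hw_unif : Measure.map w ℙ = unifDither ε)
    (hxw : IndepFun x w ℙ) :
    Measure.map (fun ω => midRiseQuantizer ε (x ω + w ω) - x ω - w ω) ℙ = unifDither ε ∧
    IndepFun (fun ω => midRiseQuantizer ε (x ω + w ω) - x ω - w ω) x ℙ := by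
  have herror : (fun ω => midRiseQuantizer ε (x ω + w ω) - x ω - w ω) =
      fun ω => quantError ε (x ω + w ω) := by
    funext ω
    rw [quantError, sub_add_eq_sub_sub]
  have hfm : Measurable fun p : ℝ × ℝ => quantError ε (p.1 + p.2) :=
    (measurable_quantError ε).comp (measurable_fst.add measurable_snd)
  obtain ⟨hindep, hlaw⟩ := hxw.skew_indepFun_and_map_eq (f := fun a s => quantError ε (a + s))
    hx hw hfm (fun a => by rw [hw_unif]; exact map_quantError_add_unifDither hε a)
  rw [herror, ← hw_unif]
  exact ⟨hlaw, hindep⟩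
end

section
/- Large data regime with quantized observables. Let ε > 0, let {v_t : t ∈ ℕ} ⊂ ℝ^N and {u_t : t ∈ ℕ} ⊂ ℝ^m be deterministic bounded sequences, and let {e_t : t ∈ ℕ} ⊂ ℝ^N and {d_t : t ∈ ℕ} ⊂ ℝ^m be random vector sequences whose scalar components, taken all together, form one dither-error family. Then for every A ∈ ℝ^{N×N} and B ∈ ℝ^{N×m}, almost surely (1/T)·Σ_{t=0}^{T−1} [ ‖(v_{t+1} + e_{t+1}) − A(v_t + e_t) − B(u_t + d_t)‖² − ‖v_{t+1} − A v_t − B u_t‖² ] → N·ε²/12 + (ε²/12)·(‖A‖² + ‖B‖²) as T → ∞. -/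
/-!
Write `w_t = v_{t+1} - A v_t - B u_t` for the clean residual and
`η_t = e_{t+1} - A e_t - B d_t` for the residual of the dither errors. The summand at time `t` is
`2 ⟪w_t, η_t⟫ + ‖η_t‖²`; as the dither errors are independent, centered and of variance `ε²/12`,
its mean is `ε²/12 · (N + ‖A‖² + ‖B‖²)`. Summands more than one step apart are functions of disjoint
sets of dither errors, hence independent, so the summands form a bounded, 1-dependent sequence.
For such a sequence the centered partial sums satisfy `E[S_T²] = O(T)`; hence
`∑ₖ E[(S_{k²}/k²)²] < ∞`, so `S_{k²}/k² → 0` almost surely, and boundedness of the summands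
controls `S_T/T` between consecutive squares.
-/

open MeasureTheory ProbabilityTheory

/-- A dither-error family: mutually independent random variables, each uniformly
distributed on `[-ε/2, ε/2]`. -/
def IsDitherFamily {Ω : Type*} [MeasureSpace Ω] {ι : Type*} (ε : ℝ) (e : ι → Ω → ℝ) : Prop :=
  (∀ i, Measurable (e i)) ∧
  iIndepFun e ℙ ∧
  ∀ i, Measure.map (e i) ℙ = unifDither ε

/-- Squared Euclidean norm of a vector in `ℝ^N`. -/
def vecNormSq {n : Type*} [Fintype n] (w : n → ℝ) : ℝ := ∑ i, (w i) ^ 2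

/-- Squared Frobenius norm of a real matrix. -/
def frobNormSq {m n : Type*} [Fintype m] [Fintype n] (A : Matrix m n ℝ) : ℝ :=
  ∑ i, ∑ j, (A i j) ^ 2

open Filter Topology Finset Function Matrix

lemma unifDither_compl_Icc (ε : ℝ) : unifDither ε (Set.Icc (-(ε / 2)) (ε / 2))ᶜ = 0 := by
  simp [unifDither, Measure.restrict_apply measurableSet_Icc.compl]

lemma integral_id_unifDither {ε : ℝ} (hε : 0 < ε) : ∫ x, x ∂unifDither ε = 0 := by
  rw [unifDither, integral_smul_measure, integral_Icc_eq_integral_Ioc,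
    ← intervalIntegral.integral_of_le (by linarith), integral_id]
  ring_nf

lemma integral_sq_unifDither {ε : ℝ} (hε : 0 < ε) : ∫ x, x ^ 2 ∂unifDither ε = ε ^ 2 / 12 := by
  rw [unifDither, integral_smul_measure, integral_Icc_eq_integral_Ioc,
    ← intervalIntegral.integral_of_le (by linarith), integral_pow, ENNReal.toReal_inv,
    ENNReal.toReal_ofReal hε.le, smul_eq_mul]
  field_simp
  ring

lemma variance_id_unifDither {ε : ℝ} (hε : 0 < ε) : variance id (unifDither ε) = ε ^ 2 / 12 := by
  rw [variance_of_integral_eq_zero aemeasurable_id (integral_id_unifDither hε)]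
  exact integral_sq_unifDither hε

namespace IsDitherFamily

variable {Ω ι : Type*} [MeasureSpace Ω] {ε : ℝ} {Z : ι → Ω → ℝ}

lemma ae_abs_le (hZ : IsDitherFamily ε Z) (i : ι) : ∀ᵐ ω, |Z i ω| ≤ ε / 2 := by
  have h := unifDither_compl_Icc ε
  rw [← hZ.2.2 i, Measure.map_apply (hZ.1 i) measurableSet_Icc.compl] at h
  filter_upwards [measure_eq_zero_iff_ae_notMem.1 h] with ω hω
  simpa [abs_le] using hω

lemma comp_injective (hZ : IsDitherFamily ε Z) {α : Type*} {ρ : α → ι} (hρ : Injective ρ) :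
    IsDitherFamily ε fun a => Z (ρ a) :=
  ⟨fun a => hZ.1 (ρ a), hZ.2.1.precomp hρ, fun a => hZ.2.2 (ρ a)⟩

lemma integral_eq_zero (hε : 0 < ε) (hZ : IsDitherFamily ε Z) (i : ι) : ∫ ω, Z i ω = 0 := by
  rw [← integral_id_unifDither hε, ← hZ.2.2 i,
    integral_map (hZ.1 i).aemeasurable (f := fun x => x) aestronglyMeasurable_id]

lemma variance_eq (hε : 0 < ε) (hZ : IsDitherFamily ε Z) (i : ι) :
    variance (Z i) ℙ = ε ^ 2 / 12 := by
  rw [← variance_id_map (hZ.1 i).aemeasurable, hZ.2.2 i, variance_id_unifDither hε]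

variable [IsProbabilityMeasure (ℙ : Measure Ω)]

lemma memLp (hZ : IsDitherFamily ε Z) (i : ι) (p : ENNReal) : MemLp (Z i) p :=
  (memLp_top_of_bound (hZ.1 i).aestronglyMeasurable _ (hZ.ae_abs_le i)).mono_exponent le_top

variable [Fintype ι]

lemma memLp_sum_mul (hZ : IsDitherFamily ε Z) (c : ι → ℝ) (p : ENNReal) :
    MemLp (fun ω => ∑ i, c i * Z i ω) p :=
  memLp_finsetSum _ fun i _ => (hZ.memLp i p).const_mul (c i)

lemma integral_sum_mul (hε : 0 < ε) (hZ : IsDitherFamily ε Z) (c : ι → ℝ) :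
    ∫ ω, ∑ i, c i * Z i ω = 0 := by
  rw [integral_finsetSum _ fun i _ => ((hZ.memLp i 1).integrable le_rfl).const_mul (c i)]
  simp [integral_const_mul, hZ.integral_eq_zero hε]

lemma integral_sum_mul_sq (hε : 0 < ε) (hZ : IsDitherFamily ε Z) (c : ι → ℝ) :
    ∫ ω, (∑ i, c i * Z i ω) ^ 2 = (∑ i, c i ^ 2) * (ε ^ 2 / 12) := by
  rw [← variance_of_integral_eq_zero (hZ.memLp_sum_mul c 1).aemeasurable
    (hZ.integral_sum_mul hε c), ← sum_fn, IndepFun.variance_sum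
      (fun i _ => (hZ.memLp i 2).const_mul (c i))
      (fun i _ j _ hij => (hZ.2.1.indepFun hij).comp (measurable_const_mul (c i))
        (measurable_const_mul (c j)))]
  simp_rw [variance_const_mul, hZ.variance_eq hε, sum_mul]

end IsDitherFamily

lemma ProbabilityTheory.iIndepFun.indepFun_comp_of_dependsOn {Ω ι β γ δ : Type*}
    [MeasurableSpace Ω] [MeasurableSpace β] [MeasurableSpace γ] [MeasurableSpace δ] [Nonempty β]
    {μ : Measure Ω} {Z : ι → Ω → β} (hZ : iIndepFun Z μ) (hmeas : ∀ i, Measurable (Z i))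
    {S T : Finset ι} (hST : Disjoint S T) {F : (ι → β) → γ} {G : (ι → β) → δ} (hF : Measurable F)
    (hG : Measurable G) (hFS : DependsOn F S) (hGT : DependsOn G T) :
    IndepFun (fun ω => F fun i => Z i ω) (fun ω => G fun i => Z i ω) μ := by
  classical
  let x₀ : ι → β := fun _ => Classical.arbitrary β
  have hF' : (fun ω => F fun i => Z i ω) = (F ∘ updateFinset x₀ S) ∘ fun ω (i : S) => Z i ω :=
    funext fun ω => hFS fun i hi => by simp [updateFinset, mem_coe.1 hi]
  have hG' : (fun ω => G fun i => Z i ω) = (G ∘ updateFinset x₀ T) ∘ fun ω (i : T) => Z i ω :=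
    funext fun ω => hGT fun i hi => by simp [updateFinset, mem_coe.1 hi]
  rw [hF', hG']
  exact (hZ.indepFun_finset S T hST hmeas).comp (hF.comp measurable_updateFinset)
    (hG.comp measurable_updateFinset)

lemma tendsto_average_of_tendsto_average_sq {x : ℕ → ℝ} {M : ℝ} (hx : ∀ t, |x t| ≤ M)
    (hsq : Tendsto (fun k : ℕ => (∑ t ∈ range (k ^ 2), x t) / (k : ℝ) ^ 2) atTop (𝓝 0)) :
    Tendsto (fun T : ℕ => 1 / (T : ℝ) * ∑ t ∈ range T, x t) atTop (𝓝 0) := by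
  have hsqrt : Tendsto Nat.sqrt atTop atTop :=
    tendsto_atTop_atTop.2 fun b => ⟨b * b, fun T hT => Nat.le_sqrt.2 hT⟩
  have hbound : Tendsto (fun T => |(∑ t ∈ range (Nat.sqrt T ^ 2), x t) / (Nat.sqrt T : ℝ) ^ 2|
      + 2 * M / Nat.sqrt T) atTop (𝓝 0) := by
    simpa only [abs_zero, add_zero, comp_def] using
      (hsq.abs.add (tendsto_const_div_atTop_nhds_zero_nat (2 * M))).comp hsqrt
  refine squeeze_zero_norm' ?_ hbound
  filter_upwards [eventually_ge_atTop 1] with T hT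
  set k := Nat.sqrt T
  have hk : 1 ≤ k := Nat.le_sqrt.2 hT
  have hkT : k ^ 2 ≤ T := Nat.sqrt_le' T
  have hTk : T - k ^ 2 ≤ 2 * k := by
    have hlt : T < (k + 1) ^ 2 := Nat.lt_succ_sqrt' T
    have hexp : (k + 1) ^ 2 = k ^ 2 + 2 * k + 1 := by ring
    omega
  have htail : |∑ t ∈ Ico (k ^ 2) T, x t| ≤ 2 * k * M := by
    calc |∑ t ∈ Ico (k ^ 2) T, x t| ≤ ∑ t ∈ Ico (k ^ 2) T, |x t| := abs_sum_le_sum_abs _ _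
      _ ≤ (T - k ^ 2 : ℕ) * M := (sum_le_sum fun t _ => hx t).trans_eq (by simp)
      _ ≤ 2 * k * M := by
        gcongr
        · exact (abs_nonneg _).trans (hx 0)
        · exact_mod_cast hTk
  have hkpos : (0 : ℝ) < (k : ℝ) ^ 2 := by positivity
  have hkT' : (k : ℝ) ^ 2 ≤ T := by exact_mod_cast hkT
  rw [← sum_range_add_sum_Ico _ hkT, Real.norm_eq_abs, abs_mul, abs_of_pos (by positivity)]
  calc 1 / (T : ℝ) * |∑ t ∈ range (k ^ 2), x t + ∑ t ∈ Ico (k ^ 2) T, x t|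
      ≤ 1 / (T : ℝ) * (|∑ t ∈ range (k ^ 2), x t| + 2 * k * M) := by
        gcongr
        exact (abs_add_le _ _).trans (by linarith)
    _ ≤ 1 / (k : ℝ) ^ 2 * (|∑ t ∈ range (k ^ 2), x t| + 2 * k * M) := by
        gcongr
        exact add_nonneg (abs_nonneg _) ((abs_nonneg _).trans htail)
    _ = |(∑ t ∈ range (k ^ 2), x t) / (k : ℝ) ^ 2| + 2 * M / k := by
        rw [abs_div, abs_of_pos hkpos]
        field_simp

section StrongLaw

variable {Ω : Type*} [MeasurableSpace Ω] {μ : Measure Ω}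

lemma ae_summable_of_summable_integral {F : ℕ → Ω → ℝ} (hF : ∀ n ω, 0 ≤ F n ω)
    (hint : ∀ n, Integrable (F n) μ) (hsum : Summable fun n => ∫ ω, F n ω ∂μ) :
    ∀ᵐ ω ∂μ, Summable fun n => F n ω := by
  have hmeas : ∀ n, AEMeasurable (fun ω => ENNReal.ofReal (F n ω)) μ := fun n =>
    (hint n).aemeasurable.ennreal_ofReal
  have hfin : ∫⁻ ω, ∑' n, ENNReal.ofReal (F n ω) ∂μ ≠ ⊤ := by
    rw [lintegral_tsum hmeas]
    simp_rw [← ofReal_integral_eq_lintegral_ofReal (hint _) (ae_of_all _ (hF _))]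
    exact hsum.tsum_ofReal_ne_top
  filter_upwards [ae_lt_top' (AEMeasurable.tsum hmeas) hfin] with ω hω
  simpa [ENNReal.toReal_ofReal (hF _ ω)] using ENNReal.summable_toReal hω.ne

variable [IsProbabilityMeasure μ]

lemma integral_sq_sum_range_le_of_orthogonal {g : ℕ → Ω → ℝ} {M : ℝ} (k : ℕ)
    (hmeas : ∀ t, AEStronglyMeasurable (g t) μ) (hbound : ∀ t, ∀ᵐ ω ∂μ, |g t ω| ≤ M)
    (horth : ∀ s t, s + k < t → ∫ ω, g s ω * g t ω ∂μ = 0) (T : ℕ) :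
    ∫ ω, (∑ t ∈ range T, g t ω) ^ 2 ∂μ ≤ (2 * k + 1) * T * M ^ 2 := by
  have hprod : ∀ s t, ∀ᵐ ω ∂μ, |g s ω * g t ω| ≤ M ^ 2 := fun s t => by
    filter_upwards [hbound s, hbound t] with ω hs ht
    rw [abs_mul, sq]
    exact mul_le_mul hs ht (abs_nonneg _) ((abs_nonneg _).trans hs)
  have hint : ∀ s t, Integrable (fun ω => g s ω * g t ω) μ := fun s t =>
    .of_bound ((hmeas s).mul (hmeas t)) _ (hprod s t)
  have hle : ∀ s t, ∫ ω, g s ω * g t ω ∂μ ≤ M ^ 2 := fun s t => by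
    simpa using integral_mono_ae (hint s t) (integrable_const (M ^ 2))
      ((hprod s t).mono fun ω h => (le_abs_self _).trans h)
  have hrow : ∀ s, ∑ t ∈ range T, ∫ ω, g s ω * g t ω ∂μ ≤ (2 * k + 1) * M ^ 2 := by
    intro s
    rw [← sum_filter_of_ne (p := fun t => s ≤ t + k ∧ t ≤ s + k)]
    · have hcard : #{t ∈ range T | s ≤ t + k ∧ t ≤ s + k} ≤ 2 * k + 1 := by
        refine (card_le_card fun t ht => ?_).trans (Nat.card_Icc (s - k) (s + k)).le |>.trans ?_
        · simp only [mem_filter] at ht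
          simp only [mem_Icc]
          omega
        · omega
      refine (sum_le_card_nsmul _ _ _ fun t _ => hle s t).trans ?_
      rw [nsmul_eq_mul]
      gcongr
      exact_mod_cast hcard
    · intro t _ hne
      by_contra hfar
      rcases not_and_or.1 hfar with hst | hts
      · exact hne (by simpa only [mul_comm] using horth t s (by omega))
      · exact hne (horth s t (by omega))
  calc ∫ ω, (∑ t ∈ range T, g t ω) ^ 2 ∂μ
      = ∑ s ∈ range T, ∑ t ∈ range T, ∫ ω, g s ω * g t ω ∂μ := by
        simp_rw [sq, sum_mul_sum]
        rw [integral_finsetSum _ fun s _ => integrable_finsetSum _ fun t _ => hint s t]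
        exact sum_congr rfl fun s _ => integral_finsetSum _ fun t _ => hint s t
    _ ≤ ∑ s ∈ range T, (2 * k + 1) * M ^ 2 := sum_le_sum fun s _ => hrow s
    _ = (2 * k + 1) * T * M ^ 2 := by simp; ring

theorem ae_tendsto_average_zero_of_orthogonal {g : ℕ → Ω → ℝ} {M : ℝ} (k : ℕ)
    (hmeas : ∀ t, AEStronglyMeasurable (g t) μ) (hbound : ∀ t, ∀ᵐ ω ∂μ, |g t ω| ≤ M)
    (horth : ∀ s t, s + k < t → ∫ ω, g s ω * g t ω ∂μ = 0) :
    ∀ᵐ ω ∂μ, Tendsto (fun T : ℕ => 1 / (T : ℝ) * ∑ t ∈ range T, g t ω) atTop (𝓝 0) := by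
  set F : ℕ → Ω → ℝ := fun n ω => (∑ t ∈ range (n ^ 2), g t ω) ^ 2 / ((n : ℝ) ^ 2) ^ 2
  have hmemLp : ∀ n, MemLp (fun ω => ∑ t ∈ range (n ^ 2), g t ω) 2 μ := fun n =>
    memLp_finsetSum _ fun t _ =>
      memLp_of_bounded (a := -M) (b := M) ((hbound t).mono fun ω h => abs_le.1 h) (hmeas t) 2
  have hint : ∀ n, Integrable (F n) μ := fun n => (hmemLp n).integrable_sq.div_const _
  have hle : ∀ n, ∫ ω, F n ω ∂μ ≤ (2 * k + 1) * M ^ 2 * (1 / (n : ℝ) ^ 2) := by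
    intro n
    rw [integral_div]
    rcases Nat.eq_zero_or_pos n with rfl | hn
    · simp
    calc (∫ ω, (∑ t ∈ range (n ^ 2), g t ω) ^ 2 ∂μ) / ((n : ℝ) ^ 2) ^ 2
        ≤ (2 * k + 1) * ((n ^ 2 : ℕ) : ℝ) * M ^ 2 / ((n : ℝ) ^ 2) ^ 2 := by
          gcongr
          exact integral_sq_sum_range_le_of_orthogonal k hmeas hbound horth _
      _ = (2 * k + 1) * M ^ 2 * (1 / (n : ℝ) ^ 2) := by
          push_cast
          field_simp
  have hsum : Summable fun n => ∫ ω, F n ω ∂μ :=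
    .of_nonneg_of_le (fun n => integral_nonneg fun ω => by positivity) hle
      ((Real.summable_one_div_nat_pow.2 one_lt_two).mul_left _)
  filter_upwards [ae_summable_of_summable_integral (fun n ω => by positivity) hint hsum,
    ae_all_iff.2 hbound] with ω hF hb
  refine tendsto_average_of_tendsto_average_sq hb ?_
  have hsq : Tendsto (fun n => ((∑ t ∈ range (n ^ 2), g t ω) / (n : ℝ) ^ 2) ^ 2) atTop (𝓝 0) := by
    simpa only [div_pow] using hF.tendsto_atTop_zero
  have habs := (Real.continuous_sqrt.tendsto 0).comp hsq
  simp only [comp_def, Real.sqrt_sq_eq_abs, Real.sqrt_zero] at habs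
  exact (tendsto_zero_iff_abs_tendsto_zero _).2 habs

theorem ae_tendsto_average_of_indepFun {g : ℕ → Ω → ℝ} {M c : ℝ} (k : ℕ)
    (hmeas : ∀ t, AEStronglyMeasurable (g t) μ) (hbound : ∀ t, ∀ᵐ ω ∂μ, |g t ω| ≤ M)
    (hmean : ∀ t, ∫ ω, g t ω ∂μ = c) (hindep : ∀ s t, s + k < t → IndepFun (g s) (g t) μ) :
    ∀ᵐ ω ∂μ, Tendsto (fun T : ℕ => 1 / (T : ℝ) * ∑ t ∈ range T, g t ω) atTop (𝓝 c) := by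
  have hint : ∀ t, Integrable (g t) μ := fun t => .of_bound (hmeas t) M (hbound t)
  have hcentered : ∀ᵐ ω ∂μ, Tendsto
      (fun T : ℕ => 1 / (T : ℝ) * ∑ t ∈ range T, (g t ω - c)) atTop (𝓝 0) := by
    refine ae_tendsto_average_zero_of_orthogonal (M := M + |c|) k
      (fun t => (hmeas t).sub aestronglyMeasurable_const)
      (fun t => (hbound t).mono fun ω h => (abs_sub _ _).trans (by linarith)) fun s t hst => ?_
    have hprod := ((hindep s t hst).comp (measurable_sub_const c) (measurable_sub_const c)
      ).integral_fun_mul_eq_mul_integral ((hmeas s).sub aestronglyMeasurable_const)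
      ((hmeas t).sub aestronglyMeasurable_const)
    simp only [Function.comp_apply] at hprod
    simp [hprod, integral_sub (hint s) (integrable_const c), hmean]
  filter_upwards [hcentered] with ω hω
  have hshift : ∀ᶠ T : ℕ in atTop, 1 / (T : ℝ) * ∑ t ∈ range T, (g t ω - c) + c
      = 1 / (T : ℝ) * ∑ t ∈ range T, g t ω := by
    filter_upwards [eventually_ge_atTop 1] with T hT
    have : (T : ℝ) ≠ 0 := by positivity
    rw [sum_sub_distrib, sum_const, card_range, nsmul_eq_mul]
    field_simp
    ring
  simpa using (hω.add_const c).congr' hshift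

end StrongLaw

section LinearModel

variable {n p : Type*}

def residualIndex (t : ℕ) (i : n) : Unit ⊕ n ⊕ p → (ℕ × n) ⊕ (ℕ × p) :=
  Sum.elim (fun _ => .inl (t + 1, i)) (Sum.elim (fun j => .inl (t, j)) fun k => .inr (t, k))

lemma residualIndex_injective (t : ℕ) (i : n) : Injective (residualIndex (p := p) t i) := by
  rintro (_ | j | k) (_ | j' | k') h <;> simp_all [residualIndex]

variable [Fintype n] [Fintype p]

lemma vecNormSq_nonneg (x : n → ℝ) : 0 ≤ vecNormSq x :=
  sum_nonneg fun i _ => sq_nonneg (x i)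

lemma vecNormSq_le_of_abs_le {x C : n → ℝ} (h : ∀ i, |x i| ≤ C i) :
    vecNormSq x ≤ ∑ i, C i ^ 2 :=
  sum_le_sum fun i _ => sq_le_sq' (neg_le_of_abs_le (h i)) (le_of_abs_le (h i))

lemma vecNormSq_add_sub_vecNormSq (x y : n → ℝ) :
    vecNormSq (x + y) - vecNormSq x = ∑ i, (2 * x i * y i + y i ^ 2) := by
  simp only [vecNormSq, ← sum_sub_distrib, Pi.add_apply]
  exact sum_congr rfl fun i _ => by ring

lemma abs_mulVec_apply_le {m : Type*} (M : Matrix m n ℝ) {x : n → ℝ} {C : ℝ}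
    (hx : ∀ j, |x j| ≤ C) (i : m) : |(M *ᵥ x) i| ≤ (∑ j, |M i j|) * C :=
  calc |(M *ᵥ x) i| ≤ ∑ j, |M i j * x j| := abs_sum_le_sum_abs _ _
    _ ≤ ∑ j, |M i j| * C := sum_le_sum fun j _ => by
        rw [abs_mul]
        exact mul_le_mul_of_nonneg_left (hx j) (abs_nonneg _)
    _ = (∑ j, |M i j|) * C := (sum_mul _ _ _).symm

variable (A : Matrix n n ℝ) (B : Matrix n p ℝ)

def linearResidual (x : ℕ → n → ℝ) (y : ℕ → p → ℝ) (t : ℕ) : n → ℝ :=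
  x (t + 1) - A *ᵥ x t - B *ᵥ y t

lemma linearResidual_add (x x' : ℕ → n → ℝ) (y y' : ℕ → p → ℝ) (t : ℕ) :
    linearResidual A B (x + x') (y + y') t
      = linearResidual A B x y t + linearResidual A B x' y' t := by
  simp only [linearResidual, Pi.add_apply, mulVec_add]
  abel

lemma abs_linearResidual_apply_le {x : ℕ → n → ℝ} {y : ℕ → p → ℝ} {Cx Cy : ℝ}
    (hx : ∀ s j, |x s j| ≤ Cx) (hy : ∀ s k, |y s k| ≤ Cy) (t : ℕ) (i : n) :
    |linearResidual A B x y t i| ≤ Cx + (∑ j, |A i j|) * Cx + (∑ k, |B i k|) * Cy := by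
  have hA := abs_mulVec_apply_le A (hx t) i
  have hB := abs_mulVec_apply_le B (hy t) i
  have hsub := (abs_sub (x (t + 1) i - (A *ᵥ x t) i) ((B *ᵥ y t) i)).trans
    (add_le_add_left (abs_sub (x (t + 1) i) ((A *ᵥ x t) i)) _)
  simp only [linearResidual, Pi.sub_apply]
  linarith [hx (t + 1) i]

def residualCoeff (i : n) : Unit ⊕ n ⊕ p → ℝ :=
  Sum.elim (fun _ => 1) (Sum.elim (fun j => -A i j) fun k => -B i k)

lemma sum_residualCoeff_sq (i : n) :
    ∑ a, residualCoeff A B i a ^ 2 = 1 + (∑ j, A i j ^ 2 + ∑ k, B i k ^ 2) := by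
  simp [residualCoeff, Fintype.sum_sum_type]

-- `z (.inl (s, j))` is the dither error on observable `j` at time `s`, `z (.inr (s, k))` the one
-- on input `k`.
def noiseResidual (z : (ℕ × n) ⊕ (ℕ × p) → ℝ) (t : ℕ) : n → ℝ :=
  linearResidual A B (curry (z ∘ Sum.inl)) (curry (z ∘ Sum.inr)) t

lemma noiseResidual_apply (z : (ℕ × n) ⊕ (ℕ × p) → ℝ) (t : ℕ) (i : n) :
    noiseResidual A B z t i = ∑ a, residualCoeff A B i a * z (residualIndex t i a) := by
  simp [noiseResidual, linearResidual, residualCoeff, residualIndex, Fintype.sum_sum_type,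
    mulVec, dotProduct]
  ring

variable (n p) in
def noiseWindow (t : ℕ) : Finset ((ℕ × n) ⊕ (ℕ × p)) :=
  (({t, t + 1} : Finset ℕ) ×ˢ univ).disjSum ({t} ×ˢ univ)

lemma disjoint_noiseWindow {s t : ℕ} (h : s + 1 < t) :
    Disjoint (noiseWindow n p s) (noiseWindow n p t) := by
  rw [disjoint_left]
  rintro (⟨s', j⟩ | ⟨s', k⟩) <;> simp [noiseWindow] <;> omega

def lossExcess (v : ℕ → n → ℝ) (u : ℕ → p → ℝ) (t : ℕ) (z : (ℕ × n) ⊕ (ℕ × p) → ℝ) : ℝ :=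
  vecNormSq (linearResidual A B (v + curry (z ∘ Sum.inl)) (u + curry (z ∘ Sum.inr)) t)
    - vecNormSq (linearResidual A B v u t)

variable (v : ℕ → n → ℝ) (u : ℕ → p → ℝ) (t : ℕ)

lemma lossExcess_eq_sum (z : (ℕ × n) ⊕ (ℕ × p) → ℝ) :
    lossExcess A B v u t z = ∑ i, (2 * linearResidual A B v u t i * noiseResidual A B z t i
      + noiseResidual A B z t i ^ 2) := by
  rw [lossExcess, linearResidual_add, vecNormSq_add_sub_vecNormSq, noiseResidual]

lemma measurable_lossExcess : Measurable (lossExcess A B v u t) := by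
  unfold lossExcess vecNormSq linearResidual
  fun_prop

lemma dependsOn_lossExcess : DependsOn (lossExcess A B v u t) (noiseWindow n p t) := by
  intro z z' h
  have hx : ∀ s ∈ ({t, t + 1} : Finset ℕ), curry (z ∘ Sum.inl) s = curry (z' ∘ Sum.inl) s :=
    fun s hs => funext fun j => h _ (by simp_all [noiseWindow])
  have hy : curry (z ∘ Sum.inr) t = curry (z' ∘ Sum.inr) t :=
    funext fun k => h _ (by simp [noiseWindow])
  simp only [lossExcess, linearResidual, Pi.add_apply, hx t (by simp), hx (t + 1) (by simp), hy]

lemma exists_abs_lossExcess_le {Cv Cu : ℝ} (hv : ∀ t i, |v t i| ≤ Cv) (hu : ∀ t k, |u t k| ≤ Cu)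
    (δ : ℝ) : ∃ M, ∀ t z, (∀ r, |z r| ≤ δ) → |lossExcess A B v u t z| ≤ M := by
  set R : ℝ → ℝ → n → ℝ := fun Cx Cy i => Cx + (∑ j, |A i j|) * Cx + (∑ k, |B i k|) * Cy
  refine ⟨∑ i, R (Cv + δ) (Cu + δ) i ^ 2 + ∑ i, R Cv Cu i ^ 2, fun t z hz => ?_⟩
  have hnoisy := vecNormSq_le_of_abs_le (abs_linearResidual_apply_le A B
    (x := v + curry (z ∘ Sum.inl)) (y := u + curry (z ∘ Sum.inr))
    (fun s j => (abs_add_le _ _).trans (add_le_add (hv s j) (hz (.inl (s, j)))))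
    (fun s k => (abs_add_le _ _).trans (add_le_add (hu s k) (hz (.inr (s, k))))) t)
  have hclean := vecNormSq_le_of_abs_le (abs_linearResidual_apply_le A B hv hu t)
  rw [lossExcess, abs_sub_le_iff]
  constructor <;> linarith [vecNormSq_nonneg (linearResidual A B v u t),
    vecNormSq_nonneg (linearResidual A B (v + curry (z ∘ Sum.inl)) (u + curry (z ∘ Sum.inr)) t)]

variable {Ω : Type*} [MeasureSpace Ω] [IsProbabilityMeasure (ℙ : Measure Ω)] {ε : ℝ}
  {Z : (ℕ × n) ⊕ (ℕ × p) → Ω → ℝ}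

namespace IsDitherFamily

lemma memLp_noiseResidual (hZ : IsDitherFamily ε Z) (i : n) (q : ENNReal) :
    MemLp (fun ω => noiseResidual A B (fun r => Z r ω) t i) q := by
  simp_rw [noiseResidual_apply]
  exact (hZ.comp_injective (residualIndex_injective t i)).memLp_sum_mul _ q

lemma integral_noiseResidual (hε : 0 < ε) (hZ : IsDitherFamily ε Z) (i : n) :
    ∫ ω, noiseResidual A B (fun r => Z r ω) t i = 0 := by
  simp_rw [noiseResidual_apply]
  exact (hZ.comp_injective (residualIndex_injective t i)).integral_sum_mul hε _

lemma integral_noiseResidual_sq (hε : 0 < ε) (hZ : IsDitherFamily ε Z) (i : n) :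
    ∫ ω, noiseResidual A B (fun r => Z r ω) t i ^ 2
      = (1 + (∑ j, A i j ^ 2 + ∑ k, B i k ^ 2)) * (ε ^ 2 / 12) := by
  simp_rw [noiseResidual_apply]
  rw [(hZ.comp_injective (residualIndex_injective t i)).integral_sum_mul_sq hε,
    sum_residualCoeff_sq]

lemma integral_lossExcess (hε : 0 < ε) (hZ : IsDitherFamily ε Z) :
    ∫ ω, lossExcess A B v u t (fun r => Z r ω)
      = Fintype.card n * ε ^ 2 / 12 + ε ^ 2 / 12 * (frobNormSq A + frobNormSq B) := by
  have hX := fun i => hZ.memLp_noiseResidual A B t i 2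
  have hlin := fun i => ((hX i).integrable one_le_two).const_mul (2 * linearResidual A B v u t i)
  have hrow : ∀ i, ∫ ω, (2 * linearResidual A B v u t i * noiseResidual A B (fun r => Z r ω) t i
      + noiseResidual A B (fun r => Z r ω) t i ^ 2)
      = (1 + (∑ j, A i j ^ 2 + ∑ k, B i k ^ 2)) * (ε ^ 2 / 12) := fun i => by
    rw [integral_add (hlin i) (hX i).integrable_sq, integral_const_mul,
      hZ.integral_noiseResidual A B t hε, hZ.integral_noiseResidual_sq A B t hε, mul_zero,
      zero_add]
  simp_rw [lossExcess_eq_sum]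
  rw [integral_finsetSum _ fun i _ => ?_, sum_congr rfl fun i _ => hrow i]
  · simp only [frobNormSq, ← sum_mul, sum_add_distrib, sum_const, card_univ, nsmul_eq_mul, mul_one]
    ring
  · exact (hlin i).add (hX i).integrable_sq

end IsDitherFamily

end LinearModel

open Matrix Filter in
/-- large data regime with quantized observables: for bounded deterministic
sequences `v_t ∈ ℝᴺ`, `u_t ∈ ℝᵐ` and dither-error sequences `e_t ∈ ℝᴺ`, `d_t ∈ ℝᵐ`
(all scalar components together forming one dither-error family), for every `A, B`,
almost surely
`(1/T) Σ_{t<T} (‖(v_{t+1}+e_{t+1}) − A(v_t+e_t) − B(u_t+d_t)‖² − ‖v_{t+1} − A v_t − B u_t‖²)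
  → N ε²/12 + (ε²/12)(‖A‖² + ‖B‖²)`. -/
theorem quantized_observables_large_data_regime
    {Ω : Type*} [MeasureSpace Ω] [IsProbabilityMeasure (ℙ : Measure Ω)]
    (ε : ℝ) (hε : 0 < ε) (N m : ℕ)
    (v : ℕ → (Fin N → ℝ)) (u : ℕ → (Fin m → ℝ))
    (Cv : ℝ) (hv : ∀ t i, |v t i| ≤ Cv)
    (Cu : ℝ) (hu : ∀ t i, |u t i| ≤ Cu)
    (e : ℕ → Ω → (Fin N → ℝ)) (d : ℕ → Ω → (Fin m → ℝ))
    (hed : IsDitherFamily ε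
      (Sum.elim (fun q : ℕ × Fin N => fun ω => e q.1 ω q.2)
                (fun q : ℕ × Fin m => fun ω => d q.1 ω q.2)))
    (A : Matrix (Fin N) (Fin N) ℝ) (B : Matrix (Fin N) (Fin m) ℝ) :
    ∀ᵐ ω ∂ℙ, Tendsto
      (fun T : ℕ => (1 / (T : ℝ)) * ∑ t ∈ Finset.range T,
        (vecNormSq ((v (t + 1) + e (t + 1) ω) - A *ᵥ (v t + e t ω) - B *ᵥ (u t + d t ω))
          - vecNormSq (v (t + 1) - A *ᵥ v t - B *ᵥ u t)))
      atTop
      (nhds ((N : ℝ) * ε ^ 2 / 12 + ε ^ 2 / 12 * (frobNormSq A + frobNormSq B))) := by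
  set Z := Sum.elim (fun q : ℕ × Fin N => fun ω => e q.1 ω q.2)
    (fun q : ℕ × Fin m => fun ω => d q.1 ω q.2)
  obtain ⟨M, hM⟩ := exists_abs_lossExcess_le A B v u hv hu (ε / 2)
  -- The summand at time `t` is `lossExcess A B v u t` at the dither errors, by unfolding.
  refine ae_tendsto_average_of_indepFun (g := fun t ω => lossExcess A B v u t fun r => Z r ω)
    (M := M) 1 (fun t => ?_) (fun t => ?_) (fun t => ?_) fun s t hst => ?_
  · exact ((measurable_lossExcess A B v u t).comp
      (measurable_pi_lambda _ hed.1)).aestronglyMeasurable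
  · filter_upwards [ae_all_iff.2 hed.ae_abs_le] with ω hω using hM t _ hω
  · simpa using hed.integral_lossExcess A B v u t hε
  · exact hed.2.1.indepFun_comp_of_dependsOn hed.1 (disjoint_noiseWindow hst)
      (measurable_lossExcess A B v u s) (measurable_lossExcess A B v u t)
      (dependsOn_lossExcess A B v u s) (dependsOn_lossExcess A B v u t)
end
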